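/- In a Hamming graph G = ∏_{i=1}^t K_{n_i} with constant threshold 2: if x and y are adjacent vertices differing exactly in coordinate i, and A ⊆ {1,…,t}, then the activation closure of x_A ∪ {y} equals x_{A \ {i}}. -/

import Mathlib

/-- The Hamming graph `∏ K_{n i}`: vertices are tuples, adjacent iff they differ
in exactly one coordinate (Hamming distance 1). -/
def hammingGraph {t : ℕ} (n : Fin t → ℕ) : SimpleGraph (Π i, Fin (n i)) where
  Adj x y := hammingDist x y = 1
  symm := ⟨fun x y (h : hammingDist x y = 1) => by show hammingDist y x = 1; rwa [hammingDist_comm]⟩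
  loopless := ⟨fun x (h : hammingDist x x = 1) => by simp [hammingDist_self] at h⟩

/-- The "subcube" `x_A`: all vertices agreeing with `x` on every coordinate in `A`. -/
def subcube {t : ℕ} {n : Fin t → ℕ} (x : Π i, Fin (n i)) (A : Set (Fin t)) :
    Set (Π i, Fin (n i)) :=
  {z | ∀ i ∈ A, z i = x i}

/-- A set `A` is closed under activation: every vertex with at least `θ v`
neighbors in `A` already belongs to `A`. -/
def activationClosed {V : Type*} [Fintype V] (G : SimpleGraph V) (θ : V → ℤ)
    (A : Set V) : Prop :=
  ∀ v : V, θ v ≤ ((A ∩ G.neighborSet v).ncard : ℤ) → v ∈ A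

/-- The activation closure `[S]_θ`: the smallest activation-closed superset of `S`. -/
def activationClosure {V : Type*} [Fintype V] (G : SimpleGraph V) (θ : V → ℤ)
    (S : Set V) : Set V :=
  ⋂₀ {A : Set V | S ⊆ A ∧ activationClosed G θ A}

section AuxClosure

variable {V : Type*} [Fintype V] (G : SimpleGraph V) (θ : V → ℤ) (S : Set V)

lemma subset_activationClosure : S ⊆ activationClosure G θ S := fun v hv A hA => hA.1 hv

lemma activationClosure_subset {A : Set V} (h1 : S ⊆ A) (h2 : activationClosed G θ A) :
    activationClosure G θ S ⊆ A := fun v hv => hv A ⟨h1, h2⟩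

lemma activationClosed_closure : activationClosed G θ (activationClosure G θ S) := by
  intro v hv A hA
  apply hA.2 v
  refine le_trans hv ?_
  have hsub : activationClosure G θ S ∩ G.neighborSet v ⊆ A ∩ G.neighborSet v :=
    Set.inter_subset_inter_left _ (activationClosure_subset G θ S hA.1 hA.2)
  exact_mod_cast Set.ncard_le_ncard hsub (Set.toFinite _)

end AuxClosure

section AuxHamming

variable {t : ℕ} {n : Fin t → ℕ}

lemma adj_update (z : Π i, Fin (n i)) (k : Fin t) (a : Fin (n k)) (ha : a ≠ z k) :
    (hammingGraph n).Adj z (Function.update z k a) := by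
  show (Finset.filter (fun j => z j ≠ Function.update z k a j) Finset.univ).card = 1
  have : (Finset.filter (fun j => z j ≠ Function.update z k a j) Finset.univ) = {k} := by
    ext j
    by_cases hj : j = k
    · subst hj; simp [Function.update_self, ha.symm]
    · simp [Function.update_of_ne hj, hj]
  rw [this]; rfl

lemma exists_diff_of_adj {v z : Π i, Fin (n i)} (h : (hammingGraph n).Adj v z) :
    ∃ k, v k ≠ z k ∧ ∀ j, j ≠ k → v j = z j := by
  have h' : (Finset.filter (fun j => v j ≠ z j) Finset.univ).card = 1 := h
  obtain ⟨k, hk⟩ := Finset.card_eq_one.mp h'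
  refine ⟨k, ?_, ?_⟩
  · have : k ∈ Finset.filter (fun j => v j ≠ z j) Finset.univ := by
      rw [hk]; exact Finset.mem_singleton_self k
    exact (Finset.mem_filter.mp this).2
  · intro j hj
    by_contra hne
    have : j ∈ Finset.filter (fun j => v j ≠ z j) Finset.univ := by simp [hne]
    rw [hk, Finset.mem_singleton] at this
    exact hj this

/-- The subcube `x_B` is activation-closed for threshold 2. -/
lemma subcube_activationClosed (x : Π i, Fin (n i)) (B : Set (Fin t)) :
    activationClosed (hammingGraph n) (fun _ => (2 : ℤ)) (subcube x B) := by
  intro v hv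
  by_contra hvmem
  simp only [subcube, Set.mem_setOf_eq, not_forall] at hvmem
  obtain ⟨j, hjB, hj⟩ := hvmem
  -- every neighbor of v in the subcube equals update v j (x j)
  have hsub : subcube x B ∩ (hammingGraph n).neighborSet v ⊆ {Function.update v j (x j)} := by
    rintro z ⟨hz1, hz2⟩
    obtain ⟨k, hk, hk'⟩ := exists_diff_of_adj hz2
    have hkj : k = j := by
      by_contra hkj
      exact hj ((hk' j (fun h => hkj h.symm)).trans (hz1 j hjB))
    subst hkj
    have : z = Function.update v k (x k) := by
      funext m
      by_cases hm : m = k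
      · subst hm; rw [Function.update_self]; exact hz1 m hjB
      · rw [Function.update_of_ne hm]; exact (hk' m hm).symm
    simp [this]
  have h1 : (subcube x B ∩ (hammingGraph n).neighborSet v).ncard ≤ 1 := by
    calc (subcube x B ∩ (hammingGraph n).neighborSet v).ncard
        ≤ ({Function.update v j (x j)} : Set _).ncard :=
          Set.ncard_le_ncard hsub (Set.toFinite _)
      _ = 1 := Set.ncard_singleton _
  have hv2 : (2:ℤ) ≤ ((subcube x B ∩ (hammingGraph n).neighborSet v).ncard : ℤ) := hv
  omega

end AuxHamming

theorem closure_subcube_union_vertex {t : ℕ} (n : Fin t → ℕ) (hn : ∀ i, 2 ≤ n i)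
    (x y : Π i, Fin (n i)) (i : Fin t)
    (hxy : (hammingGraph n).Adj x y)
    (hi : x i ≠ y i) (hagree : ∀ j, j ≠ i → x j = y j)
    (A : Set (Fin t)) :
    activationClosure (hammingGraph n) (fun _ => (2 : ℤ))
      (subcube x A ∪ {y}) = subcube x (A \ {i}) := by
  set G := hammingGraph n with hG
  set θ : (Π i, Fin (n i)) → ℤ := fun _ => 2 with hθ
  set S := subcube x A ∪ {y} with hS
  set C := activationClosure G θ S with hC
  have hSC : S ⊆ C := subset_activationClosure G θ S
  have hCclosed : activationClosed G θ C := activationClosed_closure G θ S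
  apply Set.Subset.antisymm
  · -- closure ⊆ subcube x (A \ {i})
    apply activationClosure_subset
    · rintro z (hz | hz)
      · exact fun j hj => hz j hj.1
      · rintro j ⟨hjA, hji⟩
        simp only [Set.mem_singleton_iff] at hz
        subst hz
        exact (hagree j hji).symm
    · exact subcube_activationClosed x (A \ {i})
  · -- subcube x (A \ {i}) ⊆ closure
    by_cases hiA : i ∈ A
    · -- Step 1: subcube y A ⊆ C
      have step1 : subcube y A ⊆ C := by
        have key : ∀ d : ℕ, ∀ z ∈ subcube y A, hammingDist z y ≤ d → z ∈ C := by
          intro d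
          induction d with
          | zero =>
            intro z hz hd
            have : z = y := by
              rw [← hammingDist_eq_zero]; omega
            subst this
            exact hSC (Or.inr rfl)
          | succ d ih =>
            intro z hz hd
            by_cases hzy : z = y
            · subst hzy; exact hSC (Or.inr rfl)
            · -- pick a coordinate where z differs from y
              have : ∃ k, z k ≠ y k := by
                by_contra h
                push_neg at h
                exact hzy (funext h)
              obtain ⟨k, hk⟩ := this
              have hkA : k ∉ A := fun h => hk (hz k h)
              have hki : k ≠ i := fun h => hkA (h ▸ hiA)
              -- first neighbor: w1 = update z k (y k), closer to y, in subcube y A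
              set w1 := Function.update z k (y k) with hw1
              have hw1adj : G.Adj z w1 := adj_update z k (y k) (Ne.symm hk)
              have hw1sub : w1 ∈ subcube y A := by
                intro j hj
                by_cases hjk : j = k
                · subst hjk; simp [hw1]
                · rw [hw1, Function.update_of_ne hjk]; exact hz j hj
              have hw1dist : hammingDist w1 y ≤ d := by
                have hfilt : (Finset.filter (fun j => w1 j ≠ y j) Finset.univ) =
                    (Finset.filter (fun j => z j ≠ y j) Finset.univ).erase k := by
                  ext j
                  by_cases hjk : j = k
                  · subst hjk; simp [hw1]
                  · simp [hw1, Function.update_of_ne hjk, hjk]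
                have hkmem : k ∈ Finset.filter (fun j => z j ≠ y j) Finset.univ := by simp [hk]
                have : hammingDist w1 y =
                    (Finset.filter (fun j => z j ≠ y j) Finset.univ).card - 1 := by
                  show (Finset.filter (fun j => w1 j ≠ y j) Finset.univ).card = _
                  rw [hfilt, Finset.card_erase_of_mem hkmem]
                have hzd : hammingDist z y =
                    (Finset.filter (fun j => z j ≠ y j) Finset.univ).card := rfl
                have hpos : 0 < (Finset.filter (fun j => z j ≠ y j) Finset.univ).card :=
                  Finset.card_pos.mpr ⟨k, hkmem⟩
                omega
              have hw1C : w1 ∈ C := ih w1 hw1sub hw1dist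
              -- second neighbor: w2 = update z i (x i), in subcube x A
              set w2 := Function.update z i (x i) with hw2
              have hzi : z i = y i := hz i hiA
              have hw2adj : G.Adj z w2 := adj_update z i (x i) (by rw [hzi]; exact hi)
              have hw2C : w2 ∈ C := by
                apply hSC
                left
                intro j hj
                by_cases hji : j = i
                · subst hji; simp [hw2]
                · rw [hw2, Function.update_of_ne hji, hz j hj, ← hagree j hji]
              have hne : w1 ≠ w2 := by
                intro h
                have h1 : w1 i = z i := by rw [hw1, Function.update_of_ne hki.symm]
                have h2 : w2 i = x i := by rw [hw2, Function.update_self]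
                rw [h] at h1
                exact hi (h2.symm.trans (h1.trans hzi))
              -- z has 2 neighbors in C
              apply hCclosed z
              have h2le : 2 ≤ (C ∩ G.neighborSet z).ncard := by
                rw [show (2 : ℕ) = 1 + 1 by rfl]
                refine Nat.one_add_le_iff.mpr ?_
                rw [Set.one_lt_ncard (Set.toFinite _)]
                exact ⟨w1, ⟨hw1C, hw1adj⟩, w2, ⟨hw2C, hw2adj⟩, hne⟩
              show (2:ℤ) ≤ _
              exact_mod_cast h2le
        intro z hz
        exact key (hammingDist z y) z hz le_rfl
      -- Step 2
      intro v hv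
      rcases eq_or_ne (v i) (x i) with hvi | hvi
      · apply hSC
        left
        intro j hj
        rcases eq_or_ne j i with hji | hji
        · subst hji; exact hvi
        · exact hv j ⟨hj, hji⟩
      · rcases eq_or_ne (v i) (y i) with hvy | hvy
        · apply step1
          intro j hj
          rcases eq_or_ne j i with hji | hji
          · subst hji; exact hvy
          · rw [hv j ⟨hj, hji⟩, hagree j hji]
        · -- v i is a third value; two neighbors
          set w1 := Function.update v i (x i) with hw1
          set w2 := Function.update v i (y i) with hw2
          have hw1adj : G.Adj v w1 := adj_update v i (x i) (Ne.symm hvi)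
          have hw2adj : G.Adj v w2 := adj_update v i (y i) (Ne.symm hvy)
          have hw1C : w1 ∈ C := by
            apply hSC; left
            intro j hj
            rcases eq_or_ne j i with hji | hji
            · subst hji; simp [hw1]
            · rw [hw1, Function.update_of_ne hji]; exact hv j ⟨hj, hji⟩
          have hw2C : w2 ∈ C := by
            apply step1
            intro j hj
            rcases eq_or_ne j i with hji | hji
            · subst hji; simp [hw2]
            · rw [hw2, Function.update_of_ne hji, hv j ⟨hj, hji⟩, hagree j hji]
          have hne : w1 ≠ w2 := by
            intro h
            apply hi
            have h1 : w1 i = x i := by rw [hw1, Function.update_self]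
            have h2 : w2 i = y i := by rw [hw2, Function.update_self]
            rw [h] at h1; rw [← h1, h2]
          apply hCclosed v
          have h2le : 2 ≤ (C ∩ G.neighborSet v).ncard := by
            rw [show (2 : ℕ) = 1 + 1 by rfl]
            refine Nat.one_add_le_iff.mpr ?_
            rw [Set.one_lt_ncard (Set.toFinite _)]
            exact ⟨w1, ⟨hw1C, hw1adj⟩, w2, ⟨hw2C, hw2adj⟩, hne⟩
          show (2:ℤ) ≤ _
          exact_mod_cast h2le
    · -- i ∉ A : A \ {i} = A and y ∈ subcube x A
      rw [Set.diff_singleton_eq_self hiA]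
      exact fun v hv => hSC (Or.inl hv)
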